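/- Let α be an irrational real number with 0 < α < 1/2, let k ≥ 1, and let m be a positive integer with ‖mα‖ ≥ ‖q_{k−1}α‖ + ‖q_kα‖. Then every factor of slope α that is an abelian power of period m and exponent e satisfies e < q_k. -/

import Mathlib

open scoped Classical

noncomputable section

namespace SturmianAbelian

/-- Complete quotients: `cq α t = α_t` for `t ≥ 1`; `cq α 0 = α` is a dummy value chosen so that
`cq α 1 = 1/(α - ⌊α⌋) = 1/α` when `0 < α < 1`. -/
noncomputable def cq (α : ℝ) : ℕ → ℝ
  | 0 => α
  | t + 1 => (cq α t - ⌊cq α t⌋)⁻¹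

/-- Partial quotients: `pq α t = a_t = ⌊α_t⌋` for `t ≥ 1`. -/
noncomputable def pq (α : ℝ) (t : ℕ) : ℕ := (⌊cq α t⌋).toNat

/-- Denominators of the convergents of `α`: `qd α k = q_k`, with
`q_0 = 1`, `q_1 = a_1`, `q_k = a_k q_{k-1} + q_{k-2}`. -/
noncomputable def qd (α : ℝ) : ℕ → ℕ
  | 0 => 1
  | 1 => pq α 1
  | (k + 2) => pq α (k + 2) * qd α (k + 1) + qd α k

/-- Distance from `x` to the nearest integer, `‖x‖`. -/
noncomputable def nint (x : ℝ) : ℝ := min (Int.fract x) (1 - Int.fract x)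

/-- The representative of `x` modulo 1 lying in `(0, 1]`. -/
noncomputable def fract' (x : ℝ) : ℝ := 1 - Int.fract (-x)

/-- The Sturmian word of slope `α` and intercept `ρ` in the lower convention:
`s n = 1` iff the fractional part of `ρ + nα` lies in `[1 - α, 1)`. -/
noncomputable def lowerWord (α ρ : ℝ) (n : ℕ) : Bool :=
  if 1 - α ≤ Int.fract (ρ + (n : ℝ) * α) then true else false

/-- The Sturmian word of slope `α` and intercept `ρ` in the upper convention:
`s n = 1` iff the representative of `ρ + nα` modulo 1 in `(0,1]` lies in `(1 - α, 1]`. -/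
noncomputable def upperWord (α ρ : ℝ) (n : ℕ) : Bool :=
  if 1 - α < fract' (ρ + (n : ℝ) * α) then true else false

/-- `s` is a Sturmian word of slope `α` (either convention, some intercept `ρ ∈ [0,1)`). -/
def IsSturmian (α : ℝ) (s : ℕ → Bool) : Prop :=
  ∃ ρ : ℝ, 0 ≤ ρ ∧ ρ < 1 ∧ (s = lowerWord α ρ ∨ s = upperWord α ρ)

/-- `w` is a (finite, contiguous) factor of the infinite word `s`. -/
def FactorOf (s : ℕ → Bool) (w : List Bool) : Prop :=
  ∃ i : ℕ, w = (List.range w.length).map fun j => s (i + j)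

/-- `w` is a factor of slope `α`. -/
def IsFactor (α : ℝ) (w : List Bool) : Prop :=
  ∃ s : ℕ → Bool, IsSturmian α s ∧ FactorOf s w

/-- Abelian equivalence: same length and the same number of occurrences of the letter 1. -/
def AbEq (u v : List Bool) : Prop :=
  u.length = v.length ∧ u.count true = v.count true

/-- `u` is an abelian power of period `m` and exponent `e`: a concatenation of `e ≥ 2` pairwise
abelian equivalent blocks, each of length `m ≥ 1`. -/
def IsAbelianPower (m e : ℕ) (u : List Bool) : Prop :=
  1 ≤ m ∧ 2 ≤ e ∧ u.length = e * m ∧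
  ∀ i < e, ∀ j < e, AbEq ((u.drop (i * m)).take m) ((u.drop (j * m)).take m)

/-- `w` has abelian period `m`: `w` is a contiguous factor of some abelian power of period `m`. -/
def HasAbPeriod (w : List Bool) (m : ℕ) : Prop :=
  ∃ e u, IsAbelianPower m e u ∧ w <:+: u

/-- `m` is the minimum abelian period of `w`. -/
def MinAbPeriod (w : List Bool) (m : ℕ) : Prop :=
  IsLeast {p : ℕ | HasAbPeriod w p} m

/-- `M(α) = {t·q_k : k ≥ 0, 1 ≤ t ≤ a_{k+1}}`. -/
def Mset (α : ℝ) : Set ℕ :=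
  {m | ∃ k t : ℕ, 1 ≤ t ∧ t ≤ pq α (k + 1) ∧ m = t * qd α k}

/-- The set of denominators of convergents and semiconvergents of `α`. -/
def Qsc (α : ℝ) : Set ℕ :=
  {m | (∃ k : ℕ, m = qd α k) ∨
    ∃ k l : ℕ, 1 ≤ k ∧ 1 ≤ l ∧ l < pq α (k + 1) ∧ m = l * qd α k + qd α (k - 1)}

/-- The singular factor of length `q_k`: the unique factor of slope `α` of length `q_k` that is not
abelian equivalent to any other factor of slope `α` of the same length. -/
def IsSingular (α : ℝ) (k : ℕ) (s : List Bool) : Prop :=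
  IsFactor α s ∧ s.length = qd α k ∧
  ∀ u : List Bool, IsFactor α u → u.length = qd α k → u ≠ s → ¬ AbEq u s

/-- `v` occurs in `u` at position `i`. -/
def OccursAt (v u : List Bool) (i : ℕ) : Prop :=
  i + v.length ≤ u.length ∧ (u.drop i).take v.length = v

/-- `u` is a complete first return to `v`: `v` is a prefix and a suffix of `u` and `v` has exactly
two occurrences in `u`. -/
def CompleteFirstReturn (v u : List Bool) : Prop :=
  v <+: u ∧ v <:+ u ∧ {i | OccursAt v u i}.ncard = 2

/-- `u` is a complete first return to `v` in the same phase. -/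
def CFRSamePhase (v u : List Bool) : Prop :=
  v <+: u ∧ v <:+ u ∧ u.length % v.length = 0 ∧
  2 ≤ {i | OccursAt v u i}.ncard ∧
  ∀ i : ℕ, OccursAt v u i → i % v.length = 0 → i = 0 ∨ i = u.length - v.length

/-!
Counting `1`s in a Sturmian word of slope `α` is counting lattice points: the factor of length `n`
starting at `i` contains `F (i + n) - F i` ones, where `F n = ⌊ρ + nα⌋` (lower convention) or
`⌈ρ + nα⌉` (upper convention), so the discrepancy `nα - F n` ranges over an interval of length `1`.
If each of the `e` blocks of an abelian power of period `m` contains `c` ones, the discrepancy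
changes by `e (mα - c)` across the power, hence `e ‖mα‖ ≤ e |mα - c| < 1`.

On the continued fraction side, `q_k ‖q_{k-1}α‖ + q_{k-1} ‖q_kα‖ = 1` and `q_{k-1} ≤ q_k` give
`q_k (‖q_{k-1}α‖ + ‖q_kα‖) ≥ 1`; with the hypothesis on `‖mα‖` this forces `e < q_k`.
-/

lemma nint_nonneg (x : ℝ) : 0 ≤ nint x := by
  rw [nint, ← abs_sub_round_eq_min]
  exact abs_nonneg _

lemma nint_le_abs_sub (x : ℝ) (z : ℤ) : nint x ≤ |x - z| := by
  rw [nint, ← abs_sub_round_eq_min]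
  exact round_le x z

lemma nint_eq_abs_sub {x : ℝ} {z : ℤ} (h : |x - z| < 1 / 2) : nint x = |x - z| := by
  have hz : round x = z := round_eq_iff.mpr (by
    rw [abs_lt] at h
    constructor <;> linarith)
  rw [nint, ← abs_sub_round_eq_min, hz]

section ContinuedFraction

variable {α : ℝ}

lemma irrational_cq (hirr : Irrational α) : ∀ t, Irrational (cq α t)
  | 0 => hirr
  | t + 1 => ((irrational_cq hirr t).sub_intCast _).inv

lemma fract_cq_pos (hirr : Irrational α) (t : ℕ) : 0 < Int.fract (cq α t) :=
  Int.fract_pos.mpr fun h => (irrational_cq hirr t).ne_int _ h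

lemma one_lt_cq_succ (hirr : Irrational α) (t : ℕ) : 1 < cq α (t + 1) :=
  one_lt_inv₀ (fract_cq_pos hirr t) |>.mpr (Int.fract_lt_one _)

lemma cast_pq_succ (hirr : Irrational α) (t : ℕ) :
    (pq α (t + 1) : ℝ) = ⌊cq α (t + 1)⌋ := by
  have : (0 : ℤ) ≤ ⌊cq α (t + 1)⌋ := Int.floor_nonneg.mpr (by linarith [one_lt_cq_succ hirr t])
  rw [pq, ← Int.cast_natCast, Int.toNat_of_nonneg this]

lemma one_le_pq_succ (hirr : Irrational α) (t : ℕ) : 1 ≤ pq α (t + 1) := by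
  have : (1 : ℤ) ≤ ⌊cq α (t + 1)⌋ :=
    Int.le_floor.mpr (by exact_mod_cast (one_lt_cq_succ hirr t).le)
  unfold pq
  omega

lemma qd_le_qd_succ (hirr : Irrational α) : ∀ k, qd α k ≤ qd α (k + 1)
  | 0 => one_le_pq_succ hirr 0
  | k + 1 => by
    have : qd α (k + 1) ≤ pq α (k + 2) * qd α (k + 1) :=
      Nat.le_mul_of_pos_left _ (one_le_pq_succ hirr (k + 1))
    show qd α (k + 1) ≤ pq α (k + 2) * qd α (k + 1) + qd α k
    omega

/-- `convErr α (k + 1) = |q_k α - p_k|`, and `convErr α 0 = 1 = |q_{-1} α - p_{-1}|`. -/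
def convErr (α : ℝ) : ℕ → ℝ
  | 0 => 1
  | 1 => α
  | t + 2 => convErr α t - pq α (t + 1) * convErr α (t + 1)

/-- Numerators of the convergents: `pnum α k = p_k`. -/
def pnum (α : ℝ) : ℕ → ℤ
  | 0 => 0
  | 1 => 1
  | k + 2 => pq α (k + 2) * pnum α (k + 1) + pnum α k

lemma qd_mul_sub_pnum (α : ℝ) :
    ∀ k, (qd α k : ℝ) * α - pnum α k = (-1) ^ k * convErr α (k + 1)
  | 0 => by simp [qd, pnum, convErr]
  | 1 => by simp [qd, pnum, convErr]
  | k + 2 => by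
    have ih₀ := qd_mul_sub_pnum α k
    have ih₁ := qd_mul_sub_pnum α (k + 1)
    simp only [qd, pnum, convErr, Nat.cast_add, Nat.cast_mul, Int.cast_add, Int.cast_mul,
      Int.cast_natCast, pow_succ] at ih₁ ⊢
    linear_combination (pq α (k + 2) : ℝ) * ih₁ + ih₀

lemma qd_mul_convErr_add_eq_one (α : ℝ) :
    ∀ k, (qd α (k + 1) : ℝ) * convErr α (k + 1) + qd α k * convErr α (k + 2) = 1
  | 0 => by simp only [qd, convErr]; push_cast; ring
  | k + 1 => by
    have ih := qd_mul_convErr_add_eq_one α k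
    simp only [qd, convErr, Nat.cast_add, Nat.cast_mul] at ih ⊢
    linear_combination ih

lemma convErr_succ (hirr : Irrational α) (h0 : 0 < α) (h1 : α < 1) :
    ∀ t, convErr α (t + 1) = convErr α t * Int.fract (cq α t)
  | 0 => by simp [convErr, cq, Int.fract_eq_self.mpr ⟨h0.le, h1⟩]
  | t + 1 => by
    have ih := convErr_succ hirr h0 h1 t
    have hf := (fract_cq_pos hirr t).ne'
    have hcq : cq α (t + 1) = (Int.fract (cq α t))⁻¹ := rfl
    rw [Int.fract, ← cast_pq_succ hirr, hcq]
    show convErr α t - pq α (t + 1) * convErr α (t + 1) = _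
    rw [ih]
    field_simp

lemma convErr_pos (hirr : Irrational α) (h0 : 0 < α) (h1 : α < 1) : ∀ t, 0 < convErr α t
  | 0 => one_pos
  | t + 1 => by
    rw [convErr_succ hirr h0 h1]
    exact mul_pos (convErr_pos hirr h0 h1 t) (fract_cq_pos hirr t)

lemma convErr_strictAnti (hirr : Irrational α) (h0 : 0 < α) (h1 : α < 1) :
    StrictAnti (convErr α) :=
  strictAnti_nat_of_succ_lt fun t => by
    rw [convErr_succ hirr h0 h1]
    exact mul_lt_of_lt_one_right (convErr_pos hirr h0 h1 t) (Int.fract_lt_one _)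

lemma nint_qd_mul (hirr : Irrational α) (h0 : 0 < α) (h2 : α < 1 / 2) (k : ℕ) :
    nint ((qd α k : ℝ) * α) = convErr α (k + 1) := by
  have h1 : α < 1 := by linarith
  have habs : |(qd α k : ℝ) * α - pnum α k| = convErr α (k + 1) := by
    rw [qd_mul_sub_pnum, abs_mul, abs_pow, abs_neg, abs_one, one_pow, one_mul,
      abs_of_pos (convErr_pos hirr h0 h1 _)]
  have hle : convErr α (k + 1) ≤ α :=
    (convErr_strictAnti hirr h0 h1).antitone (Nat.le_add_left 1 k)
  rw [nint_eq_abs_sub (z := pnum α k) (by linarith), habs]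

lemma one_le_qd_mul_nint_add (hirr : Irrational α) (h0 : 0 < α) (h2 : α < 1 / 2) (k : ℕ) :
    1 ≤ (qd α (k + 1) : ℝ) * (nint ((qd α k : ℝ) * α) + nint ((qd α (k + 1) : ℝ) * α)) := by
  have h1 : α < 1 := by linarith
  rw [nint_qd_mul hirr h0 h2, nint_qd_mul hirr h0 h2]
  have hq : (qd α k : ℝ) ≤ qd α (k + 1) := by exact_mod_cast qd_le_qd_succ hirr k
  nlinarith [qd_mul_convErr_add_eq_one α k, convErr_pos hirr h0 h1 (k + 2)]

end ContinuedFraction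

section Words

lemma take_drop_map_range {β : Type*} (f : ℕ → β) {a b n : ℕ} (h : a + b ≤ n) :
    (((List.range n).map f).drop a).take b = (List.range b).map fun t => f (a + t) := by
  apply List.ext_getElem
  · simp only [List.length_take, List.length_drop, List.length_map, List.length_range]
    omega
  · intro j _ _
    simp only [List.getElem_take, List.getElem_drop, List.getElem_map, List.getElem_range]

lemma count_true_map_range {s : ℕ → Bool} {F : ℕ → ℤ}
    (hF : ∀ n, (if s n then 1 else 0 : ℤ) = F (n + 1) - F n) (i : ℕ) :
    ∀ n, ((((List.range n).map fun j => s (i + j)).count true : ℕ) : ℤ) = F (i + n) - F i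
  | 0 => by simp
  | n + 1 => by
    have hstep := hF (i + n)
    rw [List.range_succ, List.map_append, List.count_append, Nat.cast_add,
      count_true_map_range hF i n, ← add_assoc]
    cases hs : s (i + n) <;> simp [hs] at hstep ⊢ <;> linarith

lemma mul_nint_lt_one_of_isAbelianPower {α : ℝ} {s : ℕ → Bool} {F : ℕ → ℤ}
    (hF : ∀ n, (if s n then 1 else 0 : ℤ) = F (n + 1) - F n)
    (hbd : ∀ n n' : ℕ, ((n : ℝ) * α - F n) - ((n' : ℝ) * α - F n') < 1)
    {m e : ℕ} {u : List Bool} (hu : FactorOf s u) (hpow : IsAbelianPower m e u) :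
    (e : ℝ) * nint ((m : ℝ) * α) < 1 := by
  obtain ⟨-, he, hlen, hab⟩ := hpow
  obtain ⟨i, hi⟩ := hu
  rw [hlen] at hi
  rw [hi] at hab
  have hblock : ∀ j < e, ((((List.range (e * m)).map fun t => s (i + t)).drop (j * m)).take m
      |>.count true : ℤ) = F (i + (j + 1) * m) - F (i + j * m) := by
    intro j hj
    simp only [take_drop_map_range _ (by nlinarith : j * m + m ≤ e * m), ← add_assoc,
      count_true_map_range hF, add_mul, one_mul]
  set c := F (i + m) - F i
  have hconst : ∀ j < e, F (i + (j + 1) * m) - F (i + j * m) = c := by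
    intro j hj
    have h0 := hblock 0 (by omega)
    rw [← hblock j hj, (hab j hj 0 (by omega)).2]
    simpa using h0
  have htele : F (i + e * m) - F i = e * c := by
    have := Finset.sum_range_sub (fun j => F (i + j * m)) e
    simp only [Finset.sum_congr rfl fun j hj => hconst j (Finset.mem_range.mp hj),
      Finset.sum_const, Finset.card_range, nsmul_eq_mul] at this
    simpa using this.symm
  have habs : |(e : ℝ) * ((m : ℝ) * α - c)| < 1 := by
    have hval : (e : ℝ) * ((m : ℝ) * α - c) =
        (((i + e * m : ℕ) : ℝ) * α - F (i + e * m)) - ((i : ℝ) * α - F i) := by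
      have : (F (i + e * m) : ℝ) = F i + e * c := by exact_mod_cast (by linarith [htele])
      push_cast
      linear_combination this
    rw [abs_lt, hval]
    constructor <;> linarith [hbd (i + e * m) i, hbd i (i + e * m)]
  calc (e : ℝ) * nint ((m : ℝ) * α) ≤ (e : ℝ) * |(m : ℝ) * α - c| :=
        mul_le_mul_of_nonneg_left (nint_le_abs_sub _ c) e.cast_nonneg
    _ = |(e : ℝ) * ((m : ℝ) * α - c)| := by rw [abs_mul, Nat.abs_cast]
    _ < 1 := habs

end Words

section Sturmian

variable {α : ℝ}

lemma floor_add_sub_floor (h0 : 0 ≤ α) (h1 : α < 1) (x : ℝ) :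
    (if 1 - α ≤ Int.fract x then 1 else 0 : ℤ) = ⌊x + α⌋ - ⌊x⌋ := by
  have hx : x + α = (Int.fract x + α) + ⌊x⌋ := by rw [Int.fract]; ring
  have := Int.fract_nonneg x
  have := Int.fract_lt_one x
  rw [hx, Int.floor_add_intCast, add_sub_cancel_right, eq_comm, Int.floor_eq_iff]
  split_ifs <;> push_cast <;> constructor <;> linarith

lemma ceil_add_sub_ceil (h0 : 0 ≤ α) (h1 : α < 1) (x : ℝ) :
    (if 1 - α < fract' x then 1 else 0 : ℤ) = ⌈x + α⌉ - ⌈x⌉ := by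
  have hx : x + α = (x - ⌈x⌉ + α) + ⌈x⌉ := by ring
  have hfract : fract' x = 1 + (x - ⌈x⌉) := by
    rw [fract', Int.fract, Int.floor_neg]
    push_cast
    ring
  have := Int.le_ceil x
  have := Int.ceil_lt_add_one x
  rw [hfract, hx, Int.ceil_add_intCast, add_sub_cancel_right, eq_comm, Int.ceil_eq_iff]
  split_ifs <;> push_cast <;> constructor <;> linarith

lemma mul_nint_lt_one_of_isFactor (h0 : 0 ≤ α) (h1 : α < 1) {m e : ℕ} {u : List Bool}
    (hu : IsFactor α u) (hpow : IsAbelianPower m e u) : (e : ℝ) * nint ((m : ℝ) * α) < 1 := by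
  have hshift : ∀ ρ : ℝ, ∀ n : ℕ, ρ + ((n + 1 : ℕ) : ℝ) * α = ρ + n * α + α := by
    intros; push_cast; ring
  obtain ⟨s, ⟨ρ, -, -, rfl | rfl⟩, hsu⟩ := hu
  · refine mul_nint_lt_one_of_isAbelianPower (F := fun n => ⌊ρ + n * α⌋)
      (fun n => ?_) (fun n n' => ?_) hsu hpow
    · rw [hshift, ← floor_add_sub_floor h0 h1, lowerWord]
      split_ifs <;> simp_all
    · have hn := Int.fract_lt_one (ρ + n * α)
      have hn' := Int.fract_nonneg (ρ + n' * α)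
      rw [Int.fract] at hn hn'
      linarith
  · refine mul_nint_lt_one_of_isAbelianPower (F := fun n => ⌈ρ + n * α⌉)
      (fun n => ?_) (fun n n' => ?_) hsu hpow
    · rw [hshift, ← ceil_add_sub_ceil h0 h1, upperWord]
      split_ifs <;> simp_all
    · have := Int.le_ceil (ρ + n * α)
      have := Int.ceil_lt_add_one (ρ + n' * α)
      linarith

end Sturmian

theorem relation_exponent_convergent_general
    (α : ℝ) (hirr : Irrational α) (h0 : 0 < α) (h2 : α < 1 / 2)
    (k : ℕ) (hk : 1 ≤ k) (m : ℕ)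
    (h : nint ((qd α (k - 1) : ℝ) * α) + nint ((qd α k : ℝ) * α) ≤ nint ((m : ℝ) * α)) :
    ∀ e : ℕ, ∀ u : List Bool, IsFactor α u → IsAbelianPower m e u → e < qd α k := by
  intro e u hu hpow
  obtain ⟨k, rfl⟩ := Nat.exists_eq_add_of_le' hk
  rw [Nat.add_sub_cancel] at h
  set S := nint ((qd α k : ℝ) * α) + nint ((qd α (k + 1) : ℝ) * α)
  have hS : (e : ℝ) * S < qd α (k + 1) * S :=
    calc (e : ℝ) * S ≤ e * nint ((m : ℝ) * α) := mul_le_mul_of_nonneg_left h e.cast_nonneg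
      _ < 1 := mul_nint_lt_one_of_isFactor h0.le (by linarith) hu hpow
      _ ≤ qd α (k + 1) * S := one_le_qd_mul_nint_add hirr h0 h2 k
  exact_mod_cast lt_of_mul_lt_mul_right hS (add_nonneg (nint_nonneg _) (nint_nonneg _))

theorem relation_exponent_convergent
    (α : ℝ) (hirr : Irrational α) (h0 : 0 < α) (h2 : α < 1 / 2)
    (k : ℕ) (hk : 1 ≤ k) (m : ℕ) (hm : 0 < m)
    (h : nint ((qd α (k - 1) : ℝ) * α) + nint ((qd α k : ℝ) * α) ≤ nint ((m : ℝ) * α)) :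
    ∀ e : ℕ, ∀ u : List Bool, IsFactor α u → IsAbelianPower m e u → e < qd α k :=
  relation_exponent_convergent_general α hirr h0 h2 k hk m h

end SturmianAbelian
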